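/- arXiv:1704.00544 — 3 statements merged into one kernel-verified Lean document; each statement's English description precedes it below -/
import Mathlib

section
/- For a ∈ 𝔻 \ {0}, the point c_-(a) := a · (2 + |a|^2 - √((|a|^2 - 4)(|a|^2 - 1)))/(3|a|^2) is a critical point of B_a(z) = z^3 (z - a)/(1 - \bar{a} z), i.e. B_a'(c_-(a)) = 0. -/
/-!
Differentiating `z ^ 3 * (z - a) / (1 - b * z)` gives the numerator
`z ^ 2 * (-3 b z ^ 2 + (4 + 2 a b) z - 3 a)`. With `b = conj a` and `z = a t`, `t` real, the
quadratic factor is `-a (3 |a|² t² - (4 + 2 |a|²) t + 3)`, and `c₋(a) = a t` for the smaller root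
`t` of this real quadratic, whose discriminant is `4 (|a|² - 4)(|a|² - 1)`. This root is not the
pole: `|a|² t = 1` would force `|a|² = 1`.
-/

open ComplexConjugate

theorem hasDerivAt_pow_three_mul_sub_div {𝕜 : Type*} [NontriviallyNormedField 𝕜] {a b z : 𝕜}
    (hz : 1 - b * z ≠ 0) :
    HasDerivAt (fun z => z ^ 3 * (z - a) / (1 - b * z))
      (z ^ 2 * (-3 * b * z ^ 2 + (4 + 2 * a * b) * z - 3 * a) / (1 - b * z) ^ 2) z := by
  have hnum : HasDerivAt (fun z => z ^ 3 * (z - a)) (↑3 * z ^ 2 * (z - a) + z ^ 3 * 1) z :=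
    (hasDerivAt_pow 3 z).mul ((hasDerivAt_id z).sub_const a)
  have hden : HasDerivAt (fun z => 1 - b * z) (-(b * 1)) z :=
    ((hasDerivAt_id z).const_mul b).const_sub 1
  exact (hnum.div hden hz).congr_deriv (by ring)

theorem quadratic_eq_zero_of_eq_sub_sqrt {u t : ℝ} (hu : u ≠ 0) (hdisc : 0 ≤ (u - 4) * (u - 1))
    (ht : t = (2 + u - √((u - 4) * (u - 1))) / (3 * u)) :
    3 * u * t ^ 2 - (4 + 2 * u) * t + 3 = 0 := by
  have hs := Real.sq_sqrt hdisc
  subst ht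
  field_simp
  linear_combination hs

theorem mul_ne_one_of_quadratic_eq_zero {u t : ℝ} (h : 3 * u * t ^ 2 - (4 + 2 * u) * t + 3 = 0)
    (hu : u ≠ 1) : u * t ≠ 1 := by
  intro hut
  have ht : t = 1 := by linear_combination (3 * t - 2) * hut - h
  exact hu (by simpa [ht] using hut)

theorem Complex.critical_quadratic_eq_zero {a : ℂ} {t : ℝ}
    (h : 3 * ‖a‖ ^ 2 * t ^ 2 - (4 + 2 * ‖a‖ ^ 2) * t + 3 = 0) :
    -3 * conj a * (a * t) ^ 2 + (4 + 2 * a * conj a) * (a * t) - 3 * a = 0 := by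
  have hC : (3 * ‖a‖ ^ 2 * t ^ 2 - (4 + 2 * ‖a‖ ^ 2) * t + 3 : ℂ) = 0 := by exact_mod_cast h
  linear_combination -a * hC + (-3 * a * t ^ 2 + 2 * a * t) * Complex.mul_conj' a

theorem Complex.one_sub_conj_mul_ne_zero {a : ℂ} {t : ℝ} (h : ‖a‖ ^ 2 * t ≠ 1) :
    1 - conj a * (a * t) ≠ 0 := by
  rw [← mul_assoc, Complex.conj_mul', sub_ne_zero, ne_comm]
  exact_mod_cast h

/-- For `a` in the punctured unit disk, the point
`c₋(a) = a (2 + |a|² − √((|a|²−4)(|a|²−1)))/(3|a|²)` is a critical point of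
the Blaschke product `B_a(z) = z^3 (z - a)/(1 - conj a * z)`. -/
theorem blaschke_critical_point_minus (a : ℂ) (ha0 : 0 < ‖a‖) (ha1 : ‖a‖ < 1) :
    deriv (fun z : ℂ => z ^ 3 * (z - a) / (1 - (starRingEnd ℂ) a * z))
      (a * (((2 + ‖a‖ ^ 2 - Real.sqrt ((‖a‖ ^ 2 - 4) * (‖a‖ ^ 2 - 1))) / (3 * ‖a‖ ^ 2) : ℝ) : ℂ))
      = 0 := by
  have hnorm_sq : ‖a‖ ^ 2 < 1 := by nlinarith
  set t : ℝ := (2 + ‖a‖ ^ 2 - √((‖a‖ ^ 2 - 4) * (‖a‖ ^ 2 - 1))) / (3 * ‖a‖ ^ 2) with ht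
  have hroot : 3 * ‖a‖ ^ 2 * t ^ 2 - (4 + 2 * ‖a‖ ^ 2) * t + 3 = 0 :=
    quadratic_eq_zero_of_eq_sub_sqrt (by positivity)
      (mul_nonneg_of_nonpos_of_nonpos (by linarith) (by linarith)) ht
  have hpole : ‖a‖ ^ 2 * t ≠ 1 := mul_ne_one_of_quadratic_eq_zero hroot hnorm_sq.ne
  rw [(hasDerivAt_pow_three_mul_sub_div (Complex.one_sub_conj_mul_ne_zero hpole)).deriv,
    Complex.critical_quadratic_eq_zero hroot, mul_zero, zero_div]
end

section
/- For a ∈ 𝔻 \ {0}, the critical point c_-(a) = a (2 + |a|^2 − √((|a|^2−4)(|a|^2−1)))/(3|a|^2) lies in the open unit disk, i.e. |c_-(a)| < 1, and is nonzero. -/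
/-- For `a` in the punctured unit disk, the critical point
`c₋(a) = a (2 + |a|² − √((|a|²−4)(|a|²−1)))/(3|a|²)` lies in the open unit disk
and is nonzero. -/
theorem critical_point_minus_in_disk (a : ℂ) (ha0 : 0 < ‖a‖) (ha1 : ‖a‖ < 1) :
    ‖a * (((2 + ‖a‖ ^ 2 - Real.sqrt ((‖a‖ ^ 2 - 4) * (‖a‖ ^ 2 - 1))) / (3 * ‖a‖ ^ 2) : ℝ) : ℂ)‖ < 1 ∧
    a * (((2 + ‖a‖ ^ 2 - Real.sqrt ((‖a‖ ^ 2 - 4) * (‖a‖ ^ 2 - 1))) / (3 * ‖a‖ ^ 2) : ℝ) : ℂ) ≠ 0 := by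
  set t := ‖a‖ with ht
  set X := (t ^ 2 - 4) * (t ^ 2 - 1) with hX
  have hs0 : 0 ≤ Real.sqrt X := Real.sqrt_nonneg X
  -- sqrt X < 2 + t^2
  have h1 : Real.sqrt X < 2 + t ^ 2 := by
    rw [show (2 + t ^ 2) = Real.sqrt ((2 + t ^ 2) ^ 2) from
      (Real.sqrt_sq (by positivity)).symm]
    apply Real.sqrt_lt_sqrt
    · nlinarith [hX, mul_pos (show (0:ℝ) < 4 - t ^ 2 by nlinarith) (show (0:ℝ) < 1 - t ^ 2 by nlinarith)]
    · nlinarith [hX]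
  -- 2 + t^2 - 3t < sqrt X
  have h2 : 2 + t ^ 2 - 3 * t < Real.sqrt X := by
    rw [show Real.sqrt X = Real.sqrt X from rfl]
    have h3 : (2 + t ^ 2 - 3 * t) ^ 2 < X := by nlinarith [hX, mul_pos (mul_pos (show (0:ℝ) < 1 - t by linarith) (show (0:ℝ) < 2 - t by linarith)) ha0]
    have h4 : 0 ≤ 2 + t ^ 2 - 3 * t := by nlinarith
    exact (Real.lt_sqrt h4).mpr h3
  have hfpos : 0 < (2 + t ^ 2 - Real.sqrt X) / (3 * t ^ 2) := by
    apply div_pos (by linarith) (by positivity)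
  constructor
  · rw [norm_mul, Complex.norm_real, Real.norm_eq_abs, abs_of_pos hfpos, ← ht]
    rw [mul_div_assoc', div_lt_one (by positivity)]
    nlinarith
  · apply mul_ne_zero
    · intro h; rw [ht, h, norm_zero] at ha0; exact lt_irrefl 0 ha0
    · exact_mod_cast ne_of_gt hfpos
end

section
/- For a ∈ 𝔻 \ {0}, the critical point c_+(a) = a (2 + |a|^2 + √((|a|^2−4)(|a|^2−1)))/(3|a|^2) lies outside the closed unit disk, i.e. |c_+(a)| > 1. -/
/-- For `a` in the punctured unit disk, the critical point
`c₊(a) = a (2 + |a|² + √((|a|²−4)(|a|²−1)))/(3|a|²)` lies outside the closed unit disk. -/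
theorem critical_point_plus_outside_disk (a : ℂ) (ha0 : 0 < ‖a‖) (ha1 : ‖a‖ < 1) :
    1 < ‖a * (((2 + ‖a‖ ^ 2 + Real.sqrt ((‖a‖ ^ 2 - 4) * (‖a‖ ^ 2 - 1))) / (3 * ‖a‖ ^ 2) : ℝ) : ℂ)‖ := by
  set r := ‖a‖ with hr
  set s := Real.sqrt ((r ^ 2 - 4) * (r ^ 2 - 1)) with hs
  have hs0 : 0 ≤ s := Real.sqrt_nonneg _
  have hx : 0 < (2 + r ^ 2 + s) / (3 * r ^ 2) := by positivity
  rw [norm_mul, Complex.norm_real, Real.norm_eq_abs, abs_of_pos hx]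
  have heq : r * ((2 + r ^ 2 + s) / (3 * r ^ 2)) = (2 + r ^ 2 + s) / (3 * r) := by
    field_simp
  rw [heq, lt_div_iff₀ (by positivity)]
  nlinarith [hs0, mul_pos (sub_pos.mpr ha1) (by linarith : (0:ℝ) < 2 - r)]
end
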